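/- arXiv:1810.03448 — 2 statements merged into one kernel-verified Lean document; each statement's English description precedes it below -/
import Mathlib

section
/- Let m, n ∈ ℕ, let μ be a partition of m, ν a partition of n, and λ a partition of mn. If r ∈ ℕ is at least the greatest part of μ, then ⟨s_ν ∘ s_{(r) ⊔ μ}, s_{(nr) ⊔ λ}⟩ = ⟨s_ν ∘ s_μ, s_λ⟩. -/
open scoped Classical

namespace Pleth

/-- A finitely supported function `f : ℕ → ℕ` is a partition when its values are weakly
decreasing.  Parts are indexed from `0`, so `f i` is the `(i+1)`-st part `λ_{i+1}`;
parts beyond the length of the partition are `0`. -/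
def IsPartition (f : ℕ →₀ ℕ) : Prop := ∀ i j : ℕ, i ≤ j → f j ≤ f i

/-- `f` is a partition of `n`. -/
def IsPartitionOf (f : ℕ →₀ ℕ) (n : ℕ) : Prop := IsPartition f ∧ f.sum (fun _ k => k) = n

/-- The multiset of (nonzero) parts of `f`. -/
def partsOf (f : ℕ →₀ ℕ) : Multiset ℕ := f.support.val.map f

/-- The rectangular partition `(v^r)` with `r` parts equal to `v`. -/
noncomputable def rect (r v : ℕ) : ℕ →₀ ℕ := (Finset.range r).sum fun i => Finsupp.single i v

/-- The dominance order on compositions:  `Dominates α β` means `α ⊵ β`. -/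
def Dominates (α β : ℕ →₀ ℕ) : Prop :=
  ∀ k : ℕ, ∑ i ∈ Finset.range k, β i ≤ ∑ i ∈ Finset.range k, α i

/-- The Young diagram of a (finitely supported) shape, with rows and columns indexed
from `0`: the cell `(i, j)` lies in row `i` and column `j`. -/
def cells (lam : ℕ →₀ ℕ) : Finset (ℕ × ℕ) :=
  (lam.support ×ˢ Finset.range (lam.support.sup lam)).filter fun p => p.2 < lam p.1

lemma mem_cells {lam : ℕ →₀ ℕ} {p : ℕ × ℕ} : p ∈ cells lam ↔ p.2 < lam p.1 := by
  constructor
  · exact fun h => (Finset.mem_filter.mp h).2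
  · intro h
    exact Finset.mem_filter.mpr ⟨Finset.mem_product.mpr
      ⟨Finsupp.mem_support_iff.mpr (by omega),
       Finset.mem_range.mpr (lt_of_lt_of_le h (Finset.le_sup (Finsupp.mem_support_iff.mpr (by omega))))⟩, h⟩

/-- The type of cells of the Young diagram of `lam`. -/
abbrev Cell (lam : ℕ →₀ ℕ) : Type := {p : ℕ × ℕ // p ∈ cells lam}

/-- A `lam`-tableau with entries in `B` is a function from the Young diagram of `lam` to `B`. -/
abbrev Tab (lam : ℕ →₀ ℕ) (B : Type*) : Type _ := Cell lam → B

/-- The rows of `t` are weakly increasing with respect to the relation `le`. -/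
def RowsWeak (lam : ℕ →₀ ℕ) {B : Type*} (le : B → B → Prop) (t : Tab lam B) : Prop :=
  ∀ p q : Cell lam, p.1.1 = q.1.1 → p.1.2 ≤ q.1.2 → le (t p) (t q)

/-- The columns of `t` are strictly increasing with respect to the relation `lt`. -/
def ColsStrict (lam : ℕ →₀ ℕ) {B : Type*} (lt : B → B → Prop) (t : Tab lam B) : Prop :=
  ∀ p q : Cell lam, p.1.2 = q.1.2 → p.1.1 < q.1.1 → lt (t p) (t q)

/-- A semistandard tableau: rows weakly increasing, columns strictly increasing. -/
def IsSemistd (lam : ℕ →₀ ℕ) {B : Type*} [LinearOrder B] (t : Tab lam B) : Prop :=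
  RowsWeak lam (· ≤ ·) t ∧ ColsStrict lam (· < ·) t

/-- The semistandard `lam`-tableaux with entries in `B`. -/
abbrev SSYT (lam : ℕ →₀ ℕ) (B : Type*) [LinearOrder B] : Type _ :=
  {t : Tab lam B // IsSemistd lam t}

/-- The coefficient of the monomial `x^α = x_0^{α 0} x_1^{α 1} ⋯` in the Schur function
`s_lam`, namely the number of semistandard `lam`-tableaux with entries in `ℕ`
(the entry `b` corresponding to the variable `x_b`) having exactly `α b` entries
equal to `b` for every `b`. -/
noncomputable def schurCoeff (lam α : ℕ →₀ ℕ) : ℕ :=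
  Nat.card {t : Tab lam ℕ // IsSemistd lam t ∧
    ∀ b : ℕ, α b = (Finset.univ.filter (fun p : Cell lam => t p = b)).card}

/-- The set of entries of column `j` of the tableau `t`. -/
noncomputable def colSet (lam : ℕ →₀ ℕ) {B : Type*} [LinearOrder B] (t : Tab lam B) (j : ℕ) :
    Finset B :=
  (Finset.univ.filter (fun p : Cell lam => p.1.2 = j)).image t

/-- The total order on (column-standard) tableaux:  `t < u` if and only if, in the rightmost
column in which `t` and `u` differ, the greatest entry not appearing in both columns lies
in `u`. -/
def tabLT (lam : ℕ →₀ ℕ) {B : Type*} [LinearOrder B] (t u : Tab lam B) : Prop :=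
  ∃ j : ℕ, colSet lam t j ≠ colSet lam u j ∧
    (∀ j' : ℕ, j < j' → colSet lam t j' = colSet lam u j') ∧
    ∃ m : B, m ∈ colSet lam u j ∧ m ∉ colSet lam t j ∧
      ∀ x : B, ((x ∈ colSet lam t j ∧ x ∉ colSet lam u j) ∨
                (x ∈ colSet lam u j ∧ x ∉ colSet lam t j)) → x ≤ m

def tabLE (lam : ℕ →₀ ℕ) {B : Type*} [LinearOrder B] (t u : Tab lam B) : Prop :=
  t = u ∨ tabLT lam t u

/-- A plethystic semistandard tableau of shape `mu^nu`: a `nu`-tableau whose entries are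
semistandard `mu`-tableaux, with rows weakly increasing and columns strictly increasing
with respect to the total order `tabLT` on semistandard `mu`-tableaux. -/
def IsPSSYT (mu nu : ℕ →₀ ℕ) {B : Type*} [LinearOrder B] (T : Tab nu (SSYT mu B)) : Prop :=
  RowsWeak nu (fun s s' => tabLE mu s.1 s'.1) T ∧
  ColsStrict nu (fun s s' => tabLT mu s.1 s'.1) T

/-- `T` has weight `α`: for every letter `b`, the total number of entries equal to `b`
among the `mu`-tableau entries of `T` is `α b`. -/
def HasWeight (mu nu : ℕ →₀ ℕ) {B : Type*} [LinearOrder B] (T : Tab nu (SSYT mu B))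
    (α : B → ℕ) : Prop :=
  ∀ b : B, α b = ∑ P : Cell nu,
    (Finset.univ.filter (fun p : Cell mu => (T P).1 p = b)).card

/-- The coefficient of the monomial `x^α` in the plethysm `s_nu ∘ s_mu`, namely the number
of plethystic semistandard tableaux of shape `mu^nu` and weight `α`. -/
noncomputable def plethCoeff (nu mu α : ℕ →₀ ℕ) : ℕ :=
  Nat.card {T : Tab nu (SSYT mu ℕ) // IsPSSYT mu nu T ∧ HasWeight mu nu T (fun b => α b)}

end Pleth

/-!
If `r ≥ μ₁`, a semistandard `(r) ⊔ μ`-tableau has at most `r` entries `0`, with equality exactly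
when its first row consists of zeros; deleting that row and lowering the other entries by one is
then a bijection onto the semistandard `μ`-tableaux, and it preserves the order on tableaux that
defines plethystic tableaux. So a plethystic tableau of shape `((r) ⊔ μ)^ν` has at most `nr`
zeros, those with exactly `nr` zeros correspond to the plethystic tableaux of shape `μ^ν`, and
the coefficient of `x^{(nr, α)}` in `s_ν ∘ s_{(r) ⊔ μ}` is that of `x^α` in `s_ν ∘ s_μ`; moreover
every `s_κ` in `s_ν ∘ s_{(r) ⊔ μ}` has `κ₁ ≤ nr`. Row deletion also gives
`K_{(nr) ⊔ κ, (nr, α)} = K_{κ, α}` for Kostka numbers, so `κ ↦ c' ((nr) ⊔ κ)` and `c` are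
coefficients of the same Schur expansion, and they agree because the Kostka matrix is
unitriangular for dominance. When `λ₁ > nr` both sides vanish.
-/
namespace Pleth

open Finset

section Parts

variable {f g : ℕ →₀ ℕ} {v : ℕ}

/-- The composition `(v, f 0, f 1, …)`: for a partition `f` with `f 0 ≤ v` this is `(v) ⊔ f`. -/
noncomputable def consPart (v : ℕ) (f : ℕ →₀ ℕ) : ℕ →₀ ℕ :=
  Finsupp.single 0 v + f.embDomain ⟨Nat.succ, Nat.succ_injective⟩

noncomputable def tailPart (f : ℕ →₀ ℕ) : ℕ →₀ ℕ :=
  Finsupp.comapDomain Nat.succ f Nat.succ_injective.injOn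

@[simp] lemma consPart_apply_zero (v : ℕ) (f : ℕ →₀ ℕ) : consPart v f 0 = v := by
  simp [consPart, Finsupp.embDomain_of_notMem_range]

@[simp] lemma consPart_apply_succ (v : ℕ) (f : ℕ →₀ ℕ) (i : ℕ) : consPart v f (i + 1) = f i := by
  rw [consPart, Finsupp.add_apply, Finsupp.single_apply, if_neg (by omega), zero_add]
  exact Finsupp.embDomain_apply_self _ f i

@[simp] lemma tailPart_apply (f : ℕ →₀ ℕ) (i : ℕ) : tailPart f i = f (i + 1) := rfl

@[simp] lemma tailPart_consPart (v : ℕ) (f : ℕ →₀ ℕ) : tailPart (consPart v f) = f := by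
  ext i; simp

lemma consPart_tailPart (f : ℕ →₀ ℕ) : consPart (f 0) (tailPart f) = f := by
  ext (_ | i) <;> simp

lemma consPart_injective (v : ℕ) : Function.Injective (consPart v) :=
  Function.LeftInverse.injective (tailPart_consPart v)

lemma IsPartition.apply_le_apply_zero (hf : IsPartition f) (i : ℕ) : f i ≤ f 0 :=
  hf 0 i i.zero_le

lemma isPartition_consPart_iff : IsPartition (consPart v f) ↔ IsPartition f ∧ f 0 ≤ v := by
  refine ⟨fun h => ⟨fun i j hij => ?_, by simpa using h 0 1 zero_le_one⟩, fun ⟨hf, hv⟩ => ?_⟩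
  · simpa using h (i + 1) (j + 1) (by omega)
  · rintro (_ | i) (_ | j) hij
    · exact le_rfl
    · simpa using (hf.apply_le_apply_zero j).trans hv
    · omega
    · simpa using hf i j (by omega)

lemma mem_partsOf_of_ne_zero {i : ℕ} (h : f i ≠ 0) : f i ∈ partsOf f :=
  Multiset.mem_map_of_mem f (Finsupp.mem_support_iff.2 h)

lemma IsPartition.le_apply_zero_of_mem_partsOf (hf : IsPartition f) {x : ℕ}
    (h : x ∈ partsOf f) : x ≤ f 0 := by
  obtain ⟨i, -, rfl⟩ := Multiset.mem_map.1 h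
  exact hf.apply_le_apply_zero i

lemma IsPartition.apply_zero_le_apply_zero_of_partsOf_eq (hg : IsPartition g)
    (h : partsOf g = v ::ₘ partsOf f) : f 0 ≤ g 0 := by
  rcases (f 0).eq_zero_or_pos with h0 | h0
  · omega
  · exact hg.le_apply_zero_of_mem_partsOf
      (h ▸ Multiset.mem_cons_of_mem (mem_partsOf_of_ne_zero h0.ne'))

lemma countP_partsOf (f : ℕ →₀ ℕ) (k : ℕ) :
    (partsOf f).countP (k ≤ ·) = #{j ∈ f.support | k ≤ f j} := by
  rw [partsOf, Multiset.countP_map, card_def, filter_val]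

lemma IsPartition.le_apply_iff (hf : IsPartition f) {k : ℕ} (hk : 0 < k) (i : ℕ) :
    k ≤ f i ↔ i < #{j ∈ f.support | k ≤ f j} := by
  have hmem : ∀ j, j ∈ ({j ∈ f.support | k ≤ f j} : Finset ℕ) ↔ k ≤ f j := fun j => by
    simp only [mem_filter, Finsupp.mem_support_iff]
    omega
  constructor
  · intro h
    have hsub : range (i + 1) ⊆ {j ∈ f.support | k ≤ f j} := fun j hj =>
      (hmem j).2 (h.trans (hf j i (by simp at hj; omega)))
    simpa using card_le_card hsub
  · intro h
    by_contra! hlt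
    have hsub : {j ∈ f.support | k ≤ f j} ⊆ range i := fun j hj => by
      have := (hmem j).1 hj
      by_contra! hij
      have := hf i j (by simpa using hij)
      omega
    simpa using h.trans_le (card_le_card hsub)

lemma IsPartition.eq_of_partsOf_eq (hf : IsPartition f) (hg : IsPartition g)
    (h : partsOf f = partsOf g) : f = g := by
  ext i
  refine eq_of_forall_le_iff fun k => ?_
  rcases k.eq_zero_or_pos with rfl | hk
  · simp
  · rw [hf.le_apply_iff hk, hg.le_apply_iff hk, ← countP_partsOf, ← countP_partsOf, h]

lemma partsOf_consPart (hv : 0 < v) (f : ℕ →₀ ℕ) : partsOf (consPart v f) = v ::ₘ partsOf f := by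
  have hsupp : (consPart v f).support = cons 0 (f.support.map ⟨Nat.succ, Nat.succ_injective⟩)
      (by simp) := by
    ext (_ | i)
    · simpa using hv.ne'
    · simp
  rw [partsOf, hsupp, cons_val, Multiset.map_cons, consPart_apply_zero, map_val,
    Multiset.map_map]
  exact congrArg _ (Multiset.map_congr rfl fun x _ => by simp)

lemma IsPartition.eq_consPart_of_partsOf_eq (hg : IsPartition g) (hf : IsPartition f)
    (hv : f 0 ≤ v) (hv0 : 0 < v) (h : partsOf g = v ::ₘ partsOf f) : g = consPart v f :=
  hg.eq_of_partsOf_eq (isPartition_consPart_iff.2 ⟨hf, hv⟩) (by rw [h, partsOf_consPart hv0])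

end Parts

section Tableaux

variable {lam : ℕ →₀ ℕ}

lemma card_filter_lt_eq_sum {ι : Type*} [Fintype ι] (g : ι → ℕ) (k : ℕ) :
    #{p | g p < k} = ∑ i ∈ range k, #{p | g p = i} := by
  rw [card_eq_sum_card_fiberwise (f := g) (t := range k) (fun p hp => by simpa using hp)]
  refine sum_congr rfl fun i hi => congrArg card ?_
  ext p
  simp only [mem_filter, mem_univ, true_and, and_iff_right_iff_imp]
  rintro rfl
  simpa using hi

lemma card_row (lam : ℕ →₀ ℕ) (i : ℕ) : #{p : Cell lam | p.1.1 = i} = lam i := by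
  rw [← card_range (lam i)]
  refine card_bij (fun p _ => p.1.2) (fun p hp => ?_) (fun p hp q hq h => ?_) (fun j hj => ?_)
  · simp only [mem_filter, mem_univ, true_and] at hp
    simpa [← hp] using mem_cells.1 p.2
  · simp only [mem_filter, mem_univ, true_and] at hp hq
    exact Subtype.ext (Prod.ext (hp.trans hq.symm) h)
  · exact ⟨⟨(i, j), mem_cells.2 (by simpa using hj)⟩, by simp, rfl⟩

lemma card_cells (lam : ℕ →₀ ℕ) : Fintype.card (Cell lam) = lam.sum fun _ k => k := by
  rw [← card_univ, card_eq_sum_card_fiberwise (f := fun p : Cell lam => p.1.1) (t := lam.support)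
    fun p _ => Finsupp.mem_support_iff.2 (Nat.zero_lt_of_lt (mem_cells.1 p.2)).ne']
  exact sum_congr rfl fun i _ => by simpa using card_row lam i

def entryCount (t : Tab lam ℕ) (b : ℕ) : ℕ := #{p | t p = b}

lemma IsSemistd.row_le (hlam : IsPartition lam) {t : Tab lam ℕ} (ht : IsSemistd lam t)
    (p : Cell lam) : p.1.1 ≤ t p := by
  obtain ⟨⟨i, j⟩, hp⟩ := p
  induction i with
  | zero => exact Nat.zero_le _
  | succ i ih =>
    have hq : (i, j) ∈ cells lam :=
      mem_cells.2 ((mem_cells.1 hp).trans_le (hlam i (i + 1) (by omega)))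
    have := ht.2 ⟨(i, j), hq⟩ ⟨(i + 1, j), hp⟩ rfl (by simp)
    have := ih hq
    simp only at *
    omega

lemma dominates_of_schurCoeff_ne_zero {κ α : ℕ →₀ ℕ} (hκ : IsPartition κ)
    (h : schurCoeff κ α ≠ 0) : Dominates κ α := by
  obtain ⟨⟨t, ht, hw⟩⟩ := (Nat.card_ne_zero.1 h).1
  intro k
  calc ∑ i ∈ range k, α i = #{p | t p < k} := by
        rw [card_filter_lt_eq_sum]
        exact sum_congr rfl fun b _ => hw b
    _ ≤ #{p : Cell κ | p.1.1 < k} :=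
        card_le_card fun p hp => by
          simp only [mem_filter, mem_univ, true_and] at hp ⊢
          exact (ht.row_le hκ p).trans_lt hp
    _ = ∑ i ∈ range k, κ i := by
        rw [card_filter_lt_eq_sum]
        exact sum_congr rfl fun i _ => card_row κ i

lemma IsSemistd.eq_row_of_weight_eq_shape (hlam : IsPartition lam) {t : Tab lam ℕ}
    (ht : IsSemistd lam t) (hw : ∀ b, lam b = entryCount t b) (p : Cell lam) : t p = p.1.1 := by
  have hsub : ∀ k, #{q | t q < k} = #{q : Cell lam | q.1.1 < k} := fun k => by
    rw [card_filter_lt_eq_sum, card_filter_lt_eq_sum]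
    exact sum_congr rfl fun i _ => (hw i).symm.trans (card_row lam i).symm
  have heq : ({q | t q < p.1.1 + 1} : Finset (Cell lam)) =
      ({q : Cell lam | q.1.1 < p.1.1 + 1} : Finset (Cell lam)) :=
    eq_of_subset_of_card_le (fun q hq => by
      simp only [mem_filter, mem_univ, true_and] at hq ⊢
      exact (ht.row_le hlam q).trans_lt hq) (hsub _).ge
  have hp : p ∈ ({q | t q < p.1.1 + 1} : Finset (Cell lam)) := by
    rw [heq]; simp
  simp only [mem_filter, mem_univ, true_and] at hp
  have := ht.row_le hlam p
  omega

lemma schurCoeff_self (hlam : IsPartition lam) : schurCoeff lam lam = 1 := by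
  rw [schurCoeff, Nat.card_eq_one_iff_unique]
  refine ⟨⟨fun ⟨t, ht, hw⟩ ⟨t', ht', hw'⟩ => Subtype.ext (funext fun p => ?_)⟩,
    ⟨⟨fun p => p.1.1, ⟨fun p q h _ => h.le, fun p q _ h => h⟩, fun b => (card_row lam b).symm⟩⟩⟩
  exact (ht.eq_row_of_weight_eq_shape hlam hw p).trans
    (ht'.eq_row_of_weight_eq_shape hlam hw' p).symm

def FirstRowZero (t : Tab lam ℕ) : Prop := ∀ p : Cell lam, p.1.1 = 0 → t p = 0

lemma IsSemistd.filter_eq_zero_subset (hlam : IsPartition lam) {t : Tab lam ℕ}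
    (ht : IsSemistd lam t) : ({p | t p = 0} : Finset (Cell lam)) ⊆
      ({p : Cell lam | p.1.1 = 0} : Finset (Cell lam)) :=
  fun p hp => by
    simp only [mem_filter, mem_univ, true_and] at hp ⊢
    simpa [hp] using ht.row_le hlam p

lemma IsSemistd.entryCount_zero_le (hlam : IsPartition lam) {t : Tab lam ℕ}
    (ht : IsSemistd lam t) : entryCount t 0 ≤ lam 0 :=
  (card_le_card (ht.filter_eq_zero_subset hlam)).trans (card_row lam 0).le

lemma IsSemistd.firstRowZero_of_entryCount_zero_eq (hlam : IsPartition lam) {t : Tab lam ℕ}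
    (ht : IsSemistd lam t) (h : entryCount t 0 = lam 0) : FirstRowZero t := by
  have heq := eq_of_subset_of_card_le (ht.filter_eq_zero_subset hlam)
    (by rw [card_row]; exact h.ge)
  intro p hp
  have : p ∈ ({p | t p = 0} : Finset (Cell lam)) := by rw [heq]; simpa using hp
  simpa using this

end Tableaux

section FirstRow

variable {μ : ℕ →₀ ℕ} {v : ℕ}

def Cell.succRow (v : ℕ) (q : Cell μ) : Cell (consPart v μ) :=
  ⟨(q.1.1 + 1, q.1.2), mem_cells.2 (by simpa using mem_cells.1 q.2)⟩

def Cell.predRow (p : Cell (consPart v μ)) (h : p.1.1 ≠ 0) : Cell μ :=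
  ⟨(p.1.1 - 1, p.1.2), mem_cells.2 (by
    have hp := mem_cells.1 p.2
    rwa [← Nat.sub_one_add_one h, consPart_apply_succ] at hp)⟩

@[simp] lemma Cell.succRow_fst (q : Cell μ) : (q.succRow v).1.1 = q.1.1 + 1 := rfl

@[simp] lemma Cell.succRow_snd (q : Cell μ) : (q.succRow v).1.2 = q.1.2 := rfl

@[simp] lemma Cell.predRow_fst (p : Cell (consPart v μ)) (h : p.1.1 ≠ 0) :
    (p.predRow h).1.1 = p.1.1 - 1 := rfl

@[simp] lemma Cell.predRow_snd (p : Cell (consPart v μ)) (h : p.1.1 ≠ 0) :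
    (p.predRow h).1.2 = p.1.2 := rfl

@[simp] lemma Cell.succRow_predRow (p : Cell (consPart v μ)) (h : p.1.1 ≠ 0) :
    (p.predRow h).succRow v = p :=
  Subtype.ext (Prod.ext (Nat.sub_one_add_one h) rfl)

lemma Cell.succRow_injective : Function.Injective (Cell.succRow (μ := μ) v) := fun q q' h => by
  have h' := congrArg Subtype.val h
  simp only [Cell.succRow, Prod.mk.injEq, Nat.add_right_cancel_iff] at h'
  exact Subtype.ext (Prod.ext h'.1 h'.2)

def lowerTab (t : Tab (consPart v μ) ℕ) : Tab μ ℕ := fun q => t (q.succRow v) - 1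

def raiseTab (s : Tab μ ℕ) : Tab (consPart v μ) ℕ := fun p =>
  if h : p.1.1 = 0 then 0 else s (p.predRow h) + 1

lemma raiseTab_of_row_eq_zero (s : Tab μ ℕ) {p : Cell (consPart v μ)} (h : p.1.1 = 0) :
    raiseTab s p = 0 :=
  dif_pos h

lemma raiseTab_of_row_ne_zero (s : Tab μ ℕ) {p : Cell (consPart v μ)} (h : p.1.1 ≠ 0) :
    raiseTab s p = s (p.predRow h) + 1 :=
  dif_neg h

@[simp] lemma raiseTab_succRow (s : Tab μ ℕ) (q : Cell μ) :
    raiseTab s (q.succRow v) = s q + 1 :=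
  raiseTab_of_row_ne_zero s (by simp)

@[simp] lemma lowerTab_raiseTab (s : Tab μ ℕ) : lowerTab (raiseTab (v := v) s) = s :=
  funext fun q => by simp [lowerTab]

lemma raiseTab_injective : Function.Injective (raiseTab (μ := μ) (v := v)) :=
  Function.LeftInverse.injective lowerTab_raiseTab

lemma raiseTab_lowerTab (hlam : IsPartition (consPart v μ)) {t : Tab (consPart v μ) ℕ}
    (ht : IsSemistd _ t) (hz : FirstRowZero t) : raiseTab (lowerTab t) = t := by
  funext p
  by_cases h : p.1.1 = 0
  · rw [raiseTab_of_row_eq_zero _ h, hz p h]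
  · have := ht.row_le hlam p
    rw [raiseTab_of_row_ne_zero _ h, lowerTab, Cell.succRow_predRow]
    omega

lemma isSemistd_raiseTab_iff {s : Tab μ ℕ} :
    IsSemistd (consPart v μ) (raiseTab s) ↔ IsSemistd μ s := by
  constructor
  · rintro ⟨hrow, hcol⟩
    refine ⟨fun p q h1 h2 => ?_, fun p q h1 h2 => ?_⟩
    · simpa using hrow (p.succRow v) (q.succRow v) (by simp [h1]) h2
    · simpa using hcol (p.succRow v) (q.succRow v) h1 (by simpa using h2)
  · rintro ⟨hrow, hcol⟩
    refine ⟨fun p q h1 h2 => ?_, fun p q h1 h2 => ?_⟩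
    · by_cases hp : p.1.1 = 0
      · rw [raiseTab_of_row_eq_zero _ hp]
        exact Nat.zero_le _
      · have hq : q.1.1 ≠ 0 := h1 ▸ hp
        rw [raiseTab_of_row_ne_zero _ hp, raiseTab_of_row_ne_zero _ hq]
        exact Nat.add_le_add_right (hrow _ _ (by simp [h1]) h2) 1
    · have hq : q.1.1 ≠ 0 := by omega
      rw [raiseTab_of_row_ne_zero _ hq]
      by_cases hp : p.1.1 = 0
      · rw [raiseTab_of_row_eq_zero _ hp]
        omega
      · rw [raiseTab_of_row_ne_zero _ hp]
        exact Nat.add_lt_add_right (hcol _ _ h1 (by simp; omega)) 1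

lemma entryCount_raiseTab_zero (s : Tab μ ℕ) : entryCount (raiseTab (v := v) s) 0 = v := by
  have hzero : ({p | raiseTab s p = 0} : Finset (Cell (consPart v μ))) =
      ({p : Cell (consPart v μ) | p.1.1 = 0} : Finset (Cell (consPart v μ))) := by
    ext p
    by_cases h : p.1.1 = 0
    · simp [h, raiseTab_of_row_eq_zero _ h]
    · simp [h, raiseTab_of_row_ne_zero _ h]
  rw [entryCount, hzero, card_row, consPart_apply_zero]

lemma entryCount_raiseTab_succ (s : Tab μ ℕ) (b : ℕ) :
    entryCount (raiseTab (v := v) s) (b + 1) = entryCount s b := by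
  symm
  refine card_bij (fun q _ => q.succRow v) (fun q hq => by simpa using hq)
    (fun q _ q' _ h => Cell.succRow_injective h) (fun p hp => ?_)
  simp only [mem_filter, mem_univ, true_and] at hp
  have h : p.1.1 ≠ 0 := fun h => by simp [raiseTab_of_row_eq_zero _ h] at hp
  refine ⟨p.predRow h, ?_, Cell.succRow_predRow p h⟩
  simpa [raiseTab_of_row_ne_zero _ h] using hp

end FirstRow

section Order

lemma eq_iff_eq_of_succ_mem_iff {A B A' B' : Finset ℕ} (hA : ∀ b, b + 1 ∈ A ↔ b ∈ A')
    (hB : ∀ b, b + 1 ∈ B ↔ b ∈ B') (h0 : 0 ∈ A ↔ 0 ∈ B) : A = B ↔ A' = B' := by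
  constructor
  · rintro rfl
    ext b
    rw [← hA, ← hB]
  · intro h
    ext (_ | b)
    · exact h0
    · rw [hA, hB, h]

lemma exists_max_symmDiff_iff_of_succ_mem_iff {A B A' B' : Finset ℕ}
    (hA : ∀ b, b + 1 ∈ A ↔ b ∈ A') (hB : ∀ b, b + 1 ∈ B ↔ b ∈ B') (h0 : 0 ∈ A ↔ 0 ∈ B) :
    (∃ m, m ∈ B ∧ m ∉ A ∧ ∀ x, (x ∈ A ∧ x ∉ B ∨ x ∈ B ∧ x ∉ A) → x ≤ m) ↔
      ∃ m, m ∈ B' ∧ m ∉ A' ∧ ∀ x, (x ∈ A' ∧ x ∉ B' ∨ x ∈ B' ∧ x ∉ A') → x ≤ m := by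
  constructor
  · rintro ⟨m, hmB, hmA, hmax⟩
    obtain ⟨b, rfl⟩ : ∃ b, m = b + 1 :=
      Nat.exists_eq_succ_of_ne_zero fun h => by subst h; exact hmA (h0.2 hmB)
    refine ⟨b, (hB b).1 hmB, fun h => hmA ((hA b).2 h), fun x hx => ?_⟩
    have := hmax (x + 1) (by rwa [hA, hB])
    omega
  · rintro ⟨b, hbB, hbA, hmax⟩
    refine ⟨b + 1, (hB b).2 hbB, fun h => hbA ((hA b).1 h), fun x hx => ?_⟩
    obtain _ | y := x
    · exact absurd h0 (by tauto)
    · have := hmax y (by rwa [← hA, ← hB])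
      omega

lemma mem_colSet {lam : ℕ →₀ ℕ} {B : Type*} [LinearOrder B] {t : Tab lam B} {j : ℕ} {a : B} :
    a ∈ colSet lam t j ↔ ∃ p : Cell lam, p.1.2 = j ∧ t p = a := by
  simp [colSet]

variable {μ : ℕ →₀ ℕ} {v : ℕ}

lemma succ_mem_colSet_raiseTab (s : Tab μ ℕ) (j b : ℕ) :
    b + 1 ∈ colSet (consPart v μ) (raiseTab s) j ↔ b ∈ colSet μ s j := by
  simp only [mem_colSet]
  constructor
  · rintro ⟨p, rfl, hp⟩
    have h : p.1.1 ≠ 0 := fun h => by simp [raiseTab_of_row_eq_zero _ h] at hp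
    exact ⟨p.predRow h, rfl, by simpa [raiseTab_of_row_ne_zero _ h] using hp⟩
  · rintro ⟨q, rfl, rfl⟩
    exact ⟨q.succRow v, rfl, raiseTab_succRow s q⟩

lemma zero_mem_colSet_raiseTab (s : Tab μ ℕ) (j : ℕ) :
    0 ∈ colSet (consPart v μ) (raiseTab s) j ↔ j < v := by
  simp only [mem_colSet]
  constructor
  · rintro ⟨p, rfl, hp⟩
    have h : p.1.1 = 0 := by
      by_contra h
      simp [raiseTab_of_row_ne_zero _ h] at hp
    simpa [h] using mem_cells.1 p.2
  · intro hj
    exact ⟨⟨(0, j), mem_cells.2 (by simpa using hj)⟩, rfl, raiseTab_of_row_eq_zero _ rfl⟩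

lemma tabLT_raiseTab_iff (s s' : Tab μ ℕ) :
    tabLT (consPart v μ) (raiseTab s) (raiseTab s') ↔ tabLT μ s s' := by
  have h0 : ∀ j, 0 ∈ colSet _ (raiseTab (v := v) s) j ↔ 0 ∈ colSet _ (raiseTab (v := v) s') j :=
    fun j => by rw [zero_mem_colSet_raiseTab, zero_mem_colSet_raiseTab]
  have heq : ∀ j, colSet _ (raiseTab (v := v) s) j = colSet _ (raiseTab (v := v) s') j ↔
      colSet μ s j = colSet μ s' j := fun j =>
    eq_iff_eq_of_succ_mem_iff (succ_mem_colSet_raiseTab s j) (succ_mem_colSet_raiseTab s' j) (h0 j)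
  refine exists_congr fun j => and_congr (not_congr (heq j))
    (and_congr (forall₂_congr fun j' _ => heq j') ?_)
  exact exists_max_symmDiff_iff_of_succ_mem_iff (succ_mem_colSet_raiseTab s j)
    (succ_mem_colSet_raiseTab s' j) (h0 j)

lemma tabLE_raiseTab_iff (s s' : Tab μ ℕ) :
    tabLE (consPart v μ) (raiseTab s) (raiseTab s') ↔ tabLE μ s s' := by
  rw [tabLE, tabLE, raiseTab_injective.eq_iff, tabLT_raiseTab_iff]

end Order

section Counting

variable {μ : ℕ →₀ ℕ} {v : ℕ}

lemma weight_raiseTab_iff (s : Tab μ ℕ) (β : ℕ →₀ ℕ) :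
    (∀ b, consPart v β b = entryCount (raiseTab (v := v) s) b) ↔ ∀ b, β b = entryCount s b := by
  constructor
  · intro h b
    simpa [entryCount_raiseTab_succ] using h (b + 1)
  · rintro h (_ | b)
    · simp [entryCount_raiseTab_zero]
    · simpa [entryCount_raiseTab_succ] using h b

lemma schurCoeff_consPart (hμ : IsPartition μ) (hv : μ 0 ≤ v) (β : ℕ →₀ ℕ) :
    schurCoeff (consPart v μ) (consPart v β) = schurCoeff μ β := by
  have hlam : IsPartition (consPart v μ) := isPartition_consPart_iff.2 ⟨hμ, hv⟩
  symm
  refine Nat.card_congr (Equiv.ofBijective (fun s => ⟨raiseTab s.1,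
    isSemistd_raiseTab_iff.2 s.2.1, (weight_raiseTab_iff s.1 β).2 s.2.2⟩) ⟨fun s s' h => ?_, ?_⟩)
  · exact Subtype.ext (raiseTab_injective (congrArg Subtype.val h))
  · rintro ⟨t, ht, hw⟩
    have hz : FirstRowZero t :=
      ht.firstRowZero_of_entryCount_zero_eq hlam ((hw 0).symm.trans (by simp))
    have hraise := raiseTab_lowerTab hlam ht hz
    refine ⟨⟨lowerTab t, isSemistd_raiseTab_iff.1 (by rwa [hraise]),
      (weight_raiseTab_iff _ β).1 (by rwa [hraise])⟩, Subtype.ext hraise⟩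

variable (nu : ℕ →₀ ℕ)

lemma hasWeight_iff {lam : ℕ →₀ ℕ} (T : Tab nu (SSYT lam ℕ)) (α : ℕ →₀ ℕ) :
    HasWeight lam nu T (fun b => α b) ↔ ∀ b, α b = ∑ P, entryCount (T P).1 b :=
  Iff.rfl

lemma apply_zero_le_of_plethCoeff_ne_zero {lam α : ℕ →₀ ℕ} (hlam : IsPartition lam)
    (h : plethCoeff nu lam α ≠ 0) : α 0 ≤ Fintype.card (Cell nu) * lam 0 := by
  obtain ⟨⟨T, -, hw⟩⟩ := (Nat.card_ne_zero.1 h).1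
  rw [(hasWeight_iff nu T α).1 hw 0, ← smul_eq_mul, ← card_univ, ← sum_const]
  exact sum_le_sum fun Q _ => (T Q).2.entryCount_zero_le hlam

lemma firstRowZero_of_hasWeight {lam α : ℕ →₀ ℕ} (hlam : IsPartition lam)
    {T : Tab nu (SSYT lam ℕ)} (hw : HasWeight lam nu T (fun b => α b))
    (h0 : α 0 = Fintype.card (Cell nu) * lam 0) (P : Cell nu) : FirstRowZero (T P).1 := by
  have hsum : ∑ Q, entryCount (T Q).1 0 = ∑ _Q : Cell nu, lam 0 := by
    rw [sum_const, card_univ, smul_eq_mul, ← h0]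
    exact ((hasWeight_iff nu T α).1 hw 0).symm
  exact (T P).2.firstRowZero_of_entryCount_zero_eq hlam
    ((sum_eq_sum_iff_of_le fun Q _ => (T Q).2.entryCount_zero_le hlam).1 hsum P (mem_univ P))

def raisePTab (T : Tab nu (SSYT μ ℕ)) : Tab nu (SSYT (consPart v μ) ℕ) :=
  fun P => ⟨raiseTab (T P).1, isSemistd_raiseTab_iff.2 (T P).2⟩

lemma raisePTab_injective : Function.Injective (raisePTab (μ := μ) (v := v) nu) :=
  fun _ _ h => funext fun P =>
    Subtype.ext (raiseTab_injective (congrArg Subtype.val (congrFun h P)))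

lemma isPSSYT_raisePTab_iff (T : Tab nu (SSYT μ ℕ)) :
    IsPSSYT (consPart v μ) nu (raisePTab nu T) ↔ IsPSSYT μ nu T := by
  simp only [IsPSSYT, RowsWeak, ColsStrict, raisePTab, tabLE_raiseTab_iff, tabLT_raiseTab_iff]

lemma hasWeight_raisePTab_iff (T : Tab nu (SSYT μ ℕ)) (β : ℕ →₀ ℕ) :
    HasWeight (consPart v μ) nu (raisePTab nu T)
        (fun b => consPart (Fintype.card (Cell nu) * v) β b) ↔
      HasWeight μ nu T (fun b => β b) := by
  rw [hasWeight_iff, hasWeight_iff]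
  constructor
  · intro h b
    simpa [raisePTab, entryCount_raiseTab_succ] using h (b + 1)
  · rintro h (_ | b)
    · simp [raisePTab, entryCount_raiseTab_zero]
    · simpa [raisePTab, entryCount_raiseTab_succ] using h b

lemma plethCoeff_consPart (hμ : IsPartition μ) (hv : μ 0 ≤ v) (β : ℕ →₀ ℕ) :
    plethCoeff nu (consPart v μ) (consPart (Fintype.card (Cell nu) * v) β) =
      plethCoeff nu μ β := by
  have hlam : IsPartition (consPart v μ) := isPartition_consPart_iff.2 ⟨hμ, hv⟩
  symm
  refine Nat.card_congr (Equiv.ofBijective (fun T => ⟨raisePTab nu T.1,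
    (isPSSYT_raisePTab_iff nu T.1).2 T.2.1, (hasWeight_raisePTab_iff nu T.1 β).2 T.2.2⟩)
    ⟨fun T T' h => Subtype.ext (raisePTab_injective nu (congrArg Subtype.val h)), ?_⟩)
  rintro ⟨T, hT, hw⟩
  have hraise : ∀ P, raiseTab (lowerTab (T P).1) = (T P).1 := fun P =>
    raiseTab_lowerTab hlam (T P).2 (firstRowZero_of_hasWeight nu hlam hw (by simp) P)
  let T' : Tab nu (SSYT μ ℕ) := fun P =>
    ⟨lowerTab (T P).1, isSemistd_raiseTab_iff.1 (by rw [hraise P]; exact (T P).2)⟩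
  have hT' : raisePTab nu T' = T := funext fun P => Subtype.ext (hraise P)
  exact ⟨⟨T', (isPSSYT_raisePTab_iff nu T').1 (hT' ▸ hT),
    (hasWeight_raisePTab_iff nu T' β).1 (hT' ▸ hw)⟩, Subtype.ext hT'⟩

end Counting

section SchurExpansion

lemma toLex_lt_toLex_of_dominates {f g : ℕ →₀ ℕ} (hd : Dominates f g) (hne : f ≠ g) :
    toLex g < toLex f := by
  have hex : ∃ i, g i ≠ f i := by
    by_contra! h
    exact hne (Finsupp.ext fun i => (h i).symm)
  have hpre : ∀ j < Nat.find hex, g j = f j := fun j hj => not_not.1 (Nat.find_min hex hj)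
  refine Finsupp.Lex.lt_iff.2 ⟨Nat.find hex, hpre, lt_of_le_of_ne ?_ (Nat.find_spec hex)⟩
  have hsum : ∑ j ∈ range (Nat.find hex), g j = ∑ j ∈ range (Nat.find hex), f j :=
    sum_congr rfl fun j hj => hpre j (mem_range.1 hj)
  have := hd (Nat.find hex + 1)
  rw [sum_range_succ, sum_range_succ, hsum] at this
  show g (Nat.find hex) ≤ f (Nat.find hex)
  omega

lemma eq_of_finsum_mul_schurCoeff_eq {a b : (ℕ →₀ ℕ) → ℕ} (ha : (Function.support a).Finite)
    (hb : (Function.support b).Finite) (ha' : ∀ κ, a κ ≠ 0 → IsPartition κ)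
    (hb' : ∀ κ, b κ ≠ 0 → IsPartition κ)
    (h : ∀ lam, IsPartition lam →
      ∑ᶠ κ, a κ * schurCoeff κ lam = ∑ᶠ κ, b κ * schurCoeff κ lam) :
    a = b := by
  by_contra hne
  set S := (ha.union hb).toFinset
  have hpart : ∀ κ, a κ ≠ b κ → IsPartition κ := fun κ hab =>
    if h0 : a κ = 0 then hb' κ fun h0' => hab (h0.trans h0'.symm) else ha' κ h0
  obtain ⟨κ₀, hκ₀, hmax⟩ := (S.filter fun κ => a κ ≠ b κ).exists_max_image toLex (by
    obtain ⟨κ, hκ⟩ := Function.ne_iff.1 hne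
    refine ⟨κ, mem_filter.2 ⟨(ha.union hb).mem_toFinset.2 ?_, hκ⟩⟩
    by_contra! hκS
    simp only [Set.mem_union, Function.mem_support, not_or, not_not] at hκS
    exact hκ (hκS.1.trans hκS.2.symm))
  rw [mem_filter] at hκ₀
  -- every other `κ` with `K(κ, κ₀) ≠ 0` strictly dominates `κ₀`, so maximality forces `a κ = b κ`
  have hoff : ∀ κ ∈ S.erase κ₀, a κ * schurCoeff κ κ₀ = b κ * schurCoeff κ κ₀ := by
    intro κ hκ
    obtain ⟨hne₀, hκS⟩ := mem_erase.1 hκ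
    by_cases hab : a κ = b κ
    · rw [hab]
    by_cases hK : schurCoeff κ κ₀ = 0
    · rw [hK, mul_zero, mul_zero]
    exact absurd (hmax κ (mem_filter.2 ⟨hκS, hab⟩)) (not_le.2
      (toLex_lt_toLex_of_dominates (dominates_of_schurCoeff_ne_zero (hpart κ hab) hK) hne₀))
  have hsplit : ∀ c : (ℕ →₀ ℕ) → ℕ, Function.support c ⊆ S →
      ∑ᶠ κ, c κ * schurCoeff κ κ₀ = c κ₀ + ∑ κ ∈ S.erase κ₀, c κ * schurCoeff κ κ₀ := by
    intro c hc
    rw [finsum_eq_finsetSum_of_support_subset _ fun κ hκ => hc (left_ne_zero_of_mul hκ),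
      ← add_sum_erase _ _ hκ₀.1, schurCoeff_self (hpart κ₀ hκ₀.2), mul_one]
  have := h κ₀ (hpart κ₀ hκ₀.2)
  rw [hsplit a fun κ hκ => (ha.union hb).mem_toFinset.2 (Or.inl hκ),
    hsplit b fun κ hκ => (ha.union hb).mem_toFinset.2 (Or.inr hκ), sum_congr rfl hoff] at this
  exact hκ₀.2 (by omega)

lemma finsum_mul_schurCoeff_self_ne_zero {c : (ℕ →₀ ℕ) → ℕ} (hc : (Function.support c).Finite)
    {τ : ℕ →₀ ℕ} (hτ : IsPartition τ) (h : c τ ≠ 0) : ∑ᶠ κ, c κ * schurCoeff κ τ ≠ 0 := by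
  have hle := single_le_finsum τ (hc.subset fun κ hκ => left_ne_zero_of_mul hκ)
    fun κ => Nat.zero_le (c κ * schurCoeff κ τ)
  rw [schurCoeff_self hτ, mul_one] at hle
  omega

lemma apply_zero_le_of_coeff_ne_zero {nu lam : ℕ →₀ ℕ} (hlam : IsPartition lam)
    {c : (ℕ →₀ ℕ) → ℕ} (hc0 : (Function.support c).Finite) (hc1 : ∀ κ, c κ ≠ 0 → IsPartition κ)
    (hc : ∀ α, plethCoeff nu lam α = ∑ᶠ κ, c κ * schurCoeff κ α) {τ : ℕ →₀ ℕ} (hτ : c τ ≠ 0) :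
    τ 0 ≤ Fintype.card (Cell nu) * lam 0 :=
  apply_zero_le_of_plethCoeff_ne_zero nu hlam
    (hc τ ▸ finsum_mul_schurCoeff_self_ne_zero hc0 (hc1 τ hτ) hτ)

lemma finsum_mul_schurCoeff_consPart {c : (ℕ →₀ ℕ) → ℕ} {w : ℕ}
    (hc : ∀ τ, c τ ≠ 0 → IsPartition τ ∧ τ 0 ≤ w) (β : ℕ →₀ ℕ) :
    ∑ᶠ τ, c τ * schurCoeff τ (consPart w β) = ∑ᶠ κ, c (consPart w κ) * schurCoeff κ β := by
  -- a contributing `τ` has `τ 0 ≤ w` by assumption and `w ≤ τ 0` by dominance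
  have hrange : ∀ τ ∈ Function.support fun τ => c τ * schurCoeff τ (consPart w β),
      τ ∈ Set.univ ↔ τ ∈ Set.range (consPart w) := by
    intro τ hτ
    obtain ⟨hτp, hτw⟩ := hc τ (left_ne_zero_of_mul hτ)
    have hwτ : w ≤ τ 0 := by
      simpa using dominates_of_schurCoeff_ne_zero hτp (right_ne_zero_of_mul hτ) 1
    refine iff_of_true trivial ⟨tailPart τ, ?_⟩
    rw [← le_antisymm hτw hwτ, consPart_tailPart]
  rw [← finsum_mem_univ, finsum_mem_inter_support_eq' _ _ _ hrange,
    finsum_mem_range (consPart_injective w)]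
  refine finsum_congr fun κ => ?_
  by_cases h : c (consPart w κ) = 0
  · rw [h, zero_mul, zero_mul]
  · obtain ⟨hκ, hκw⟩ := isPartition_consPart_iff.1 (hc _ h).1
    rw [schurCoeff_consPart hκ hκw]

end SchurExpansion

/-- `c` and `c'` are the coefficients of `s_ν ∘ s_μ = ∑_κ c κ s_κ` and
`s_ν ∘ s_ρ = ∑_κ c' κ s_κ`, the identities being checked monomial by monomial; `ρ = (r) ⊔ μ` and
`σ = (nr) ⊔ λ` are given by their multisets of parts. -/
theorem mult_cons_eq_general (m n r : ℕ) (hn : 0 < n) (hr : 0 < r)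
    (mu nu lam rho sigma : ℕ →₀ ℕ)
    (hmu : IsPartitionOf mu m) (hnu : IsPartitionOf nu n) (hlam : IsPartitionOf lam (m * n))
    (hrbig : mu 0 ≤ r)
    (hrho : IsPartition rho) (hrhoparts : partsOf rho = r ::ₘ partsOf mu)
    (hsigma : IsPartition sigma) (hsigmaparts : partsOf sigma = (n * r) ::ₘ partsOf lam)
    (c c' : (ℕ →₀ ℕ) → ℕ)
    (hc0 : (Function.support c).Finite)
    (hc1 : ∀ κ, c κ ≠ 0 → IsPartitionOf κ (m * n))
    (hc : ∀ α : ℕ →₀ ℕ, plethCoeff nu mu α = ∑ᶠ κ, c κ * schurCoeff κ α)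
    (hc'0 : (Function.support c').Finite)
    (hc'1 : ∀ κ, c' κ ≠ 0 → IsPartitionOf κ ((m + r) * n))
    (hc' : ∀ α : ℕ →₀ ℕ, plethCoeff nu rho α = ∑ᶠ κ, c' κ * schurCoeff κ α) :
    c' sigma = c lam := by
  have hcard : Fintype.card (Cell nu) = n := by rw [card_cells, hnu.2]
  obtain rfl := hrho.eq_consPart_of_partsOf_eq hmu.1 hrbig hr hrhoparts
  have hbound : ∀ τ, c' τ ≠ 0 → IsPartition τ ∧ τ 0 ≤ n * r := fun τ hτ => by
    refine ⟨(hc'1 τ hτ).1, ?_⟩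
    simpa [hcard] using apply_zero_le_of_coeff_ne_zero
      (isPartition_consPart_iff.2 ⟨hmu.1, hrbig⟩) hc'0 (fun κ h => (hc'1 κ h).1) hc' hτ
  have hcoeff : (fun κ => c' (consPart (n * r) κ)) = c := by
    refine eq_of_finsum_mul_schurCoeff_eq (hc'0.preimage (consPart_injective _).injOn) hc0
      (fun κ hκ => (isPartition_consPart_iff.1 (hbound _ hκ).1).1) (fun κ hκ => (hc1 κ hκ).1)
      fun β _ => ?_
    rw [← finsum_mul_schurCoeff_consPart hbound, ← hc', ← hcard, plethCoeff_consPart nu hmu.1 hrbig,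
      hc]
  by_cases hle : lam 0 ≤ n * r
  · rw [hsigma.eq_consPart_of_partsOf_eq hlam.1 hle (Nat.mul_pos hn hr) hsigmaparts]
    exact congrFun hcoeff lam
  · have hlam0 : c lam = 0 := by
      rw [← congrFun hcoeff lam]
      by_contra h
      exact hle (isPartition_consPart_iff.1 (hbound _ h).1).2
    have hsigma0 : c' sigma = 0 := by
      by_contra h
      have := hsigma.apply_zero_le_apply_zero_of_partsOf_eq hsigmaparts
      have := (hbound sigma h).2
      omega
    rw [hsigma0, hlam0]

/-- **Theorem 1 (de Boeck–Paget–Wildon).**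
Let `μ ⊢ m`, `ν ⊢ n`, `λ ⊢ mn`.  If `r` is at least the greatest part of `μ` then
`⟨s_ν ∘ s_{(r) ⊔ μ}, s_{(nr) ⊔ λ}⟩ = ⟨s_ν ∘ s_μ, s_λ⟩`.
Here `ρ = (r) ⊔ μ` and `σ = (nr) ⊔ λ` are specified by their multisets of parts, and the
plethysm coefficients `⟨s_ν ∘ s_μ, s_λ⟩` are expressed through (arbitrary) expansions of the
plethysms in the basis of Schur functions: `c` and `c'` are coefficient functions, supported
on partitions of the appropriate size, with
`s_ν ∘ s_μ = ∑_κ c κ · s_κ` and `s_ν ∘ s_ρ = ∑_κ c' κ · s_κ`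
(an identity of symmetric functions, checked monomial by monomial). -/
theorem mult_cons_eq (m n r : ℕ) (hm : 0 < m) (hn : 0 < n) (hr : 0 < r)
    (mu nu lam rho sigma : ℕ →₀ ℕ)
    (hmu : IsPartitionOf mu m) (hnu : IsPartitionOf nu n) (hlam : IsPartitionOf lam (m * n))
    (hrbig : mu 0 ≤ r)
    (hrho : IsPartition rho) (hrhoparts : partsOf rho = r ::ₘ partsOf mu)
    (hsigma : IsPartition sigma) (hsigmaparts : partsOf sigma = (n * r) ::ₘ partsOf lam)
    (c c' : (ℕ →₀ ℕ) → ℕ)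
    (hc0 : (Function.support c).Finite)
    (hc1 : ∀ κ, c κ ≠ 0 → IsPartitionOf κ (m * n))
    (hc : ∀ α : ℕ →₀ ℕ, plethCoeff nu mu α = ∑ᶠ κ, c κ * schurCoeff κ α)
    (hc'0 : (Function.support c').Finite)
    (hc'1 : ∀ κ, c' κ ≠ 0 → IsPartitionOf κ ((m + r) * n))
    (hc' : ∀ α : ℕ →₀ ℕ, plethCoeff nu rho α = ∑ᶠ κ, c' κ * schurCoeff κ α) :
    c' sigma = c lam :=
  mult_cons_eq_general m n r hn hr mu nu lam rho sigma hmu hnu hlam hrbig hrho hrhoparts hsigma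
    hsigmaparts c c' hc0 hc1 hc hc'0 hc'1 hc'

end Pleth
end

section
/- Let λ be a partition, let 1 ≤ j < j' ≤ λ_1 and 1 ≤ i ≤ λ'_{j'} (where λ' is the conjugate partition). Define A_λ(i,j) = {(i,j), (i+1,j), …, (λ'_j, j)} and B_λ(i,j') = {(1,j'), (2,j'), …, (i,j')}, subsets of the Young diagram [λ]. Then for every λ-tableau t with entries from B, ∑_τ sgn(τ) F(tτ) = 0, where the sum is over all permutations τ of the set A_λ(i,j) ∪ B_λ(i,j'). -/
open scoped Classical

namespace Pleth

/-- The canonical index type for the basis of `Sym^lam V`, where `V` is free with basis `B`: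
one multiset of entries (of the right size) for each row of the Young diagram. -/
abbrev RowData (lam : ℕ →₀ ℕ) (B : Type*) : Type _ := (i : ℕ) → Sym B (lam i)

/-- A concrete model for `Sym^lam V = ⊗_i Sym^{lam_i} V`, where `V` is the free `K`-module
with basis `{v_b : b ∈ B}`:  the free `K`-module on the GL-tabloids, i.e. on `RowData lam B`. -/
abbrev SymMod (lam : ℕ →₀ ℕ) (B : Type*) (K : Type*) [Semiring K] : Type _ :=
  RowData lam B →₀ K

/-- The multisets of row entries of a tableau. -/
def rowData (lam : ℕ →₀ ℕ) {B : Type*} (t : Tab lam B) : RowData lam B := fun i =>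
  ⟨(Finset.range (lam i)).attach.val.map
      (fun j => t ⟨(i, j.1), mem_cells.mpr (Finset.mem_range.mp j.2)⟩), by rw [Multiset.card_map, ← Finset.card_def, Finset.card_attach, Finset.card_range]⟩

/-- The GL-tabloid `f(t) = ⊗_i ∏_j v_{t(i,j)} ∈ Sym^lam V`. -/
noncomputable def tabloid (K : Type*) [CommRing K] (lam : ℕ →₀ ℕ) {B : Type*}
    (t : Tab lam B) : SymMod lam B K :=
  Finsupp.single (rowData lam t) 1

/-- The place-permutation action: `(t σ) (x) = t (σ⁻¹ x)`. -/
def permTab (lam : ℕ →₀ ℕ) {B : Type*} (t : Tab lam B) (σ : Equiv.Perm (Cell lam)) :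
    Tab lam B := fun p => t (σ⁻¹ p)

/-- `σ` preserves each column of the Young diagram, i.e. `σ ∈ CPP(lam)`. -/
def ColPres (lam : ℕ →₀ ℕ) (σ : Equiv.Perm (Cell lam)) : Prop :=
  ∀ p : Cell lam, (σ p).1.2 = p.1.2

/-- The GL-polytabloid `F(t) = ∑_{σ ∈ CPP(lam)} sgn(σ) f(tσ)`. -/
noncomputable def polytabloid (K : Type*) [CommRing K] (lam : ℕ →₀ ℕ) {B : Type*}
    (t : Tab lam B) : SymMod lam B K :=
  ∑ σ : Equiv.Perm (Cell lam),
    if ColPres lam σ then ((Equiv.Perm.sign σ : ℤ) • tabloid K lam (permTab lam t σ)) else 0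

/-- `∇^lam (V)`: the `K`-submodule of `Sym^lam V` spanned by the GL-polytabloids. -/
noncomputable def nabla (K : Type*) [CommRing K] (lam : ℕ →₀ ℕ) (B : Type*) :
    Submodule K (SymMod lam B K) :=
  Submodule.span K (Set.range (fun t : Tab lam B => polytabloid K lam t))

/-- The number of entries `≤ b` in row `i` of `t`; as a function of `i` this is the
composition `t^{≤ b}`. -/
noncomputable def rowCountLe (lam : ℕ →₀ ℕ) {B : Type*} [LinearOrder B] (t : Tab lam B)
    (b : B) (i : ℕ) : ℕ :=
  (Finset.univ.filter (fun p : Cell lam => p.1.1 = i ∧ t p ≤ b)).card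

/-- The dominance order on (row-semistandard) tableaux of the same shape:
`t ⊵ u` iff `t^{≤b} ⊵ u^{≤b}` for every `b`. -/
def TabDom (lam : ℕ →₀ ℕ) {B : Type*} [LinearOrder B] (t u : Tab lam B) : Prop :=
  ∀ b : B, ∀ k : ℕ,
    ∑ i ∈ Finset.range k, rowCountLe lam u b i ≤ ∑ i ∈ Finset.range k, rowCountLe lam t b i

/-- `t̄`: the tableau obtained from `t` by sorting each row into weakly increasing order. -/
noncomputable def rowsort (lam : ℕ →₀ ℕ) {B : Type*} [LinearOrder B] (t : Tab lam B) :
    Tab lam B :=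
  fun p => (List.insertionSort (· ≤ ·) ((List.range (lam p.1.1)).attach.map
      (fun j => t ⟨(p.1.1, j.1), mem_cells.mpr (List.mem_range.mp j.2)⟩))).getD p.1.2 (t p)

end Pleth

namespace Pleth

/-!
Expanding every polytabloid turns the sum into `∑_{σ ∈ CPP(λ)} sgn σ ∑_τ sgn τ f(tστ)`, and each
inner sum vanishes. The snake `A ∪ B` has `λ'_j + 1` cells, while `στ` sends it into columns `j`
and `j'`, which only meet the `λ'_j` rows of column `j`; so `στ` puts two snake cells into one
row. Right multiplying `τ` by the transposition of such a pair, chosen as a function of the row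
pattern of `στ` (which the transposition preserves), is a sign-reversing involution that leaves
the tabloid `f(tστ)` unchanged.
-/

open Equiv Finset

section Cancellation

variable {X β : Type*} [DecidableEq X]

noncomputable def collisionSwap (s : Set X) (φ : X → β) : Perm X :=
  if h : ∃ q : X × X, q.1 ∈ s ∧ q.2 ∈ s ∧ q.1 ≠ q.2 ∧ φ q.1 = φ q.2
  then swap h.choose.1 h.choose.2 else 1

section CollisionSwap

variable {s : Set X} {φ : X → β}

lemma collisionSwap_mul_self : collisionSwap s φ * collisionSwap s φ = 1 := by
  unfold collisionSwap
  split_ifs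
  · exact swap_mul_self _ _
  · exact mul_one 1

lemma comp_collisionSwap : φ ∘ collisionSwap s φ = φ := by
  unfold collisionSwap
  split_ifs with h
  · obtain ⟨-, -, -, heq⟩ := h.choose_spec
    rw [comp_swap_eq_update, heq, Function.update_eq_self, ← heq, Function.update_eq_self]
  · rfl

lemma collisionSwap_apply_of_notMem {x : X} (hx : x ∉ s) : collisionSwap s φ x = x := by
  unfold collisionSwap
  split_ifs with h
  · obtain ⟨h₁, h₂, -, -⟩ := h.choose_spec
    exact swap_apply_of_ne_of_ne (ne_of_mem_of_not_mem h₁ hx).symm (ne_of_mem_of_not_mem h₂ hx).symm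
  · rfl

lemma sign_collisionSwap [Fintype X] (h : ¬ s.InjOn φ) : Perm.sign (collisionSwap s φ) = -1 := by
  have hex : ∃ q : X × X, q.1 ∈ s ∧ q.2 ∈ s ∧ q.1 ≠ q.2 ∧ φ q.1 = φ q.2 := by
    simp only [Set.InjOn, not_forall] at h
    obtain ⟨x, hx, y, hy, hxy, hne⟩ := h
    exact ⟨(x, y), hx, hy, hne, hxy⟩
  rw [collisionSwap, dif_pos hex, Perm.sign_swap hex.choose_spec.2.2.1]

end CollisionSwap

theorem sum_sign_smul_eq_zero_of_not_injOn [Fintype X] {M : Type*} [AddCommGroup M]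
    (s : Set X) (ρ : X → β) (h : Perm X → M) {S : Finset (Perm X)}
    (hS : ∀ τ, τ ∈ S ↔ ∀ x, x ∉ s → τ x = x)
    (h_congr : ∀ τ₁ τ₂ : Perm X, ρ ∘ τ₁ = ρ ∘ τ₂ → h τ₁ = h τ₂)
    (h_coll : ∀ τ : Perm X, (∀ x, x ∉ s → τ x = x) → ¬ s.InjOn (ρ ∘ τ)) :
    ∑ τ ∈ S, (Perm.sign τ : ℤ) • h τ = 0 := by
  let g : Perm X → Perm X := fun τ => τ * collisionSwap s (ρ ∘ τ)
  have hg_comp (τ : Perm X) : ρ ∘ g τ = ρ ∘ τ := by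
    rw [Perm.coe_mul, ← Function.comp_assoc]
    exact comp_collisionSwap
  have hg_fix (τ : Perm X) : (∀ x, x ∉ s → g τ x = x) ↔ ∀ x, x ∉ s → τ x = x := by
    refine forall₂_congr fun x hx => ?_
    rw [Perm.mul_apply, collisionSwap_apply_of_notMem hx]
  refine sum_involution (fun τ _ => g τ) (fun τ hτ => ?_) (fun τ hτ _ hgτ => ?_)
    (fun τ hτ => (hS _).2 ((hg_fix τ).2 ((hS τ).1 hτ))) (fun τ _ => ?_)
  · rw [h_congr _ _ (hg_comp τ), Perm.sign_mul, sign_collisionSwap (h_coll τ ((hS τ).1 hτ))]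
    simp
  · have hone : collisionSwap s (ρ ∘ τ) = 1 := mul_left_cancel (hgτ.trans (mul_one τ).symm)
    have hsign := sign_collisionSwap (h_coll τ ((hS τ).1 hτ))
    rw [hone, Perm.sign_one] at hsign
    exact absurd hsign (by decide)
  · change g τ * collisionSwap s (ρ ∘ g τ) = τ
    rw [hg_comp, mul_assoc, collisionSwap_mul_self, mul_one]

end Cancellation

section Tableaux

variable {lam : ℕ →₀ ℕ} {B : Type*}

lemma permTab_mul (t : Tab lam B) (σ τ : Perm (Cell lam)) :
    permTab lam (permTab lam t τ) σ = permTab lam t (σ * τ) := by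
  funext p
  simp [permTab, mul_inv_rev, Perm.mul_apply]

lemma coe_rowData (t : Tab lam B) (r : ℕ) :
    (rowData lam t r : Multiset B) = (univ.filter fun p : Cell lam => p.1.1 = r).val.map t := by
  have hrow : (univ.filter fun p : Cell lam => p.1.1 = r) =
      (range (lam r)).attach.map ⟨fun j => ⟨(r, j.1), mem_cells.mpr (mem_range.mp j.2)⟩,
        fun a b hab => Subtype.ext (congrArg (fun p : Cell lam => p.1.2) hab)⟩ := by
    ext ⟨⟨a, b⟩, hab⟩
    simp only [mem_filter, mem_univ, true_and, mem_map, mem_attach, Subtype.exists, mem_range]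
    constructor
    · rintro rfl
      exact ⟨b, mem_cells.mp hab, rfl⟩
    · rintro ⟨c, _, hc⟩
      exact (congrArg (fun p : Cell lam => p.1.1) hc).symm
  rw [hrow, map_val, Multiset.map_map]
  rfl

lemma coe_rowData_permTab (t : Tab lam B) (π : Perm (Cell lam)) (r : ℕ) :
    (rowData lam (permTab lam t π) r : Multiset B) =
      (univ.filter fun p : Cell lam => (π p).1.1 = r).val.map t := by
  have hrow : (univ.filter fun p : Cell lam => (π p).1.1 = r) =
      (univ.filter fun p : Cell lam => p.1.1 = r).map (π⁻¹ : Perm (Cell lam)).toEmbedding := by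
    ext q
    simp [Perm.inv_def]
  rw [coe_rowData, hrow, map_val, Multiset.map_map]
  rfl

lemma tabloid_permTab_congr (K : Type*) [CommRing K] (t : Tab lam B) {π₁ π₂ : Perm (Cell lam)}
    (h : ∀ p, (π₁ p).1.1 = (π₂ p).1.1) :
    tabloid K lam (permTab lam t π₁) = tabloid K lam (permTab lam t π₂) := by
  unfold tabloid
  congr 1
  funext r
  exact Sym.ext (by simp only [coe_rowData_permTab, h])

lemma polytabloid_permTab (K : Type*) [CommRing K] (t : Tab lam B) (τ : Perm (Cell lam)) :
    polytabloid K lam (permTab lam t τ) = ∑ σ : Perm (Cell lam),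
      if ColPres lam σ then (Perm.sign σ : ℤ) • tabloid K lam (permTab lam t (σ * τ)) else 0 := by
  simp only [polytabloid, permTab_mul]

end Tableaux

section Snake

variable {lam : ℕ →₀ ℕ} {i j j' : ℕ}

def snake (i j j' : ℕ) : Set (ℕ × ℕ) := {p | (p.2 = j ∧ i ≤ p.1) ∨ (p.2 = j' ∧ p.1 ≤ i)}

lemma card_rows_lt_card_snake (hlam : IsPartition lam) (hjj' : j < j')
    (hcell : ((i, j') : ℕ × ℕ) ∈ cells lam) :
    (lam.support.filter (j < lam ·)).card <
      (univ.filter fun p : Cell lam => p.1 ∈ snake i j j').card := by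
  have hlow (r : ℕ) (hr : r ≤ i) : j' < lam r := (mem_cells.mp hcell).trans_le (hlam r i hr)
  set d : Cell lam := ⟨(i, j'), hcell⟩
  have hd : d ∈ univ.filter fun p : Cell lam => p.1 ∈ snake i j j' :=
    mem_filter.mpr ⟨mem_univ _, Or.inr ⟨rfl, le_rfl⟩⟩
  -- every row meeting column `j` is the row of a snake cell other than `(i, j')`
  have hsurj : Set.SurjOn (fun p : Cell lam => p.1.1)
      ((univ.filter fun p : Cell lam => p.1 ∈ snake i j j').erase d)
      (lam.support.filter (j < lam ·)) := by
    intro r hr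
    have hjr : j < lam r := (mem_filter.mp hr).2
    rcases le_or_gt i r with hir | hri
    · refine ⟨⟨(r, j), mem_cells.mpr hjr⟩, mem_erase.mpr ⟨fun h => ?_,
        mem_filter.mpr ⟨mem_univ _, Or.inl ⟨rfl, hir⟩⟩⟩, rfl⟩
      exact hjj'.ne (congrArg (fun p : Cell lam => p.1.2) h)
    · refine ⟨⟨(r, j'), mem_cells.mpr (hlow r hri.le)⟩, mem_erase.mpr ⟨fun h => ?_,
        mem_filter.mpr ⟨mem_univ _, Or.inr ⟨rfl, hri.le⟩⟩⟩, rfl⟩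
      exact hri.ne (congrArg (fun p : Cell lam => p.1.1) h)
  have := card_le_card_of_surjOn _ hsurj
  rw [card_erase_of_mem hd] at this
  have := card_pos.mpr ⟨d, hd⟩
  omega

lemma not_injOn_row_snake (hlam : IsPartition lam) (hjj' : j < j')
    (hcell : ((i, j') : ℕ × ℕ) ∈ cells lam) (f : Cell lam → Cell lam)
    (hf : ∀ p : Cell lam, p.1 ∈ snake i j j' → (f p).1.2 = j ∨ (f p).1.2 = j') :
    ¬ Set.InjOn (fun p => (f p).1.1) (Subtype.val ⁻¹' snake i j j') := by
  intro hinj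
  have hmaps : Set.MapsTo (fun p => (f p).1.1)
      (univ.filter fun p : Cell lam => p.1 ∈ snake i j j') (lam.support.filter (j < lam ·)) := by
    intro p hp
    have hcol := mem_cells.mp (f p).2
    have hjr : j < lam (f p).1.1 := by
      rcases hf p (mem_filter.mp hp).2 with h | h <;> rw [h] at hcol <;> omega
    exact mem_filter.mpr ⟨Finsupp.mem_support_iff.mpr (Nat.ne_zero_of_lt hjr), hjr⟩
  have := card_le_card_of_injOn _ hmaps (hinj.mono fun p hp => (mem_filter.mp hp).2)
  exact (card_rows_lt_card_snake hlam hjj' hcell).not_ge this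

end Snake

/-- Rows and columns are indexed from `0`, so the paper's `1 ≤ j < j' ≤ λ_1` and
`1 ≤ i ≤ λ'_{j'}` read `j < j'` and `(i, j') ∈ [lam]` here. -/
theorem garnir_relation (K : Type*) [CommRing K] {B : Type*} (lam : ℕ →₀ ℕ)
    (hlam : IsPartition lam) (i j j' : ℕ) (hjj' : j < j')
    (hcell : ((i, j') : ℕ × ℕ) ∈ cells lam) (t : Tab lam B) :
    ∑ τ : Equiv.Perm (Cell lam),
      (if (∀ p : Cell lam, ¬((p.1.2 = j ∧ i ≤ p.1.1) ∨ (p.1.2 = j' ∧ p.1.1 ≤ i)) → τ p = p)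
        then ((Equiv.Perm.sign τ : ℤ) • polytabloid K lam (permTab lam t τ))
        else (0 : SymMod lam B K)) = 0 := by
  simp only [polytabloid_permTab, smul_sum, ← sum_filter]
  rw [sum_comm]
  refine sum_eq_zero fun σ hσ => ?_
  simp only [smul_comm _ (Perm.sign σ : ℤ), ← smul_sum]
  rw [sum_sign_smul_eq_zero_of_not_injOn (Subtype.val ⁻¹' snake i j j') (fun p => (σ p).1.1)
    (fun τ => tabloid K lam (permTab lam t (σ * τ))) (fun τ => ?_)
    (fun τ₁ τ₂ h => tabloid_permTab_congr K t (congrFun h)) (fun τ hτ => ?_), smul_zero]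
  · simp [snake]
  · refine not_injOn_row_snake hlam hjj' hcell (σ * τ) fun p hp => ?_
    have hτp : (τ p).1 ∈ snake i j j' := by
      by_contra h
      rw [τ.injective (hτ _ h)] at h
      exact h hp
    rw [Perm.mul_apply, (mem_filter.mp hσ).2 (τ p)]
    exact hτp.imp And.left And.left

end Pleth
end
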